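/- For k = 1, …, 6 let u_k = (cos((k−1)π/3), sin((k−1)π/3)) ∈ ℝ², and define H = { (1/(3j−2))·u_k : k ∈ {1,3,5}, j ∈ ℕ, j ≥ 1 } ∪ { (1/(3j−1))·u_k : k ∈ {2,4,6}, j ∈ ℕ, j ≥ 1 }. Then H ∪ {0} is compact, countable, not collinear, and no affine line meets H ∪ {0} in exactly two points. -/

import Mathlib

/-- The unit vector at angle `(k-1)π/3` from the positive x-axis. -/
noncomputable def u (k : ℕ) : EuclideanSpace ℝ (Fin 2) :=
  !₂[Real.cos ((k - 1 : ℝ) * Real.pi / 3), Real.sin ((k - 1 : ℝ) * Real.pi / 3)]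

/-- The point set of the construction. -/
noncomputable def Hset : Set (EuclideanSpace ℝ (Fin 2)) :=
  {x | ∃ k ∈ ({1, 3, 5} : Set ℕ), ∃ j : ℕ, 1 ≤ j ∧ x = (1 / (3 * (j : ℝ) - 2)) • u k} ∪
  {x | ∃ k ∈ ({2, 4, 6} : Set ℕ), ∃ j : ℕ, 1 ≤ j ∧ x = (1 / (3 * (j : ℝ) - 1)) • u k}

/-- An affine line: an affine subspace whose direction is one-dimensional. -/
def IsLine (L : AffineSubspace ℝ (EuclideanSpace ℝ (Fin 2))) : Prop :=
  Module.finrank ℝ L.direction = 1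

abbrev EE := EuclideanSpace ℝ (Fin 2)

noncomputable def det2 (x y : EE) : ℝ := x 0 * y 1 - x 1 * y 0

lemma eext {x y : EE} (h0 : x 0 = y 0) (h1 : x 1 = y 1) : x = y := by
  ext i; fin_cases i <;> assumption

lemma c23 : Real.cos (2 * Real.pi / 3) = -(1/2) := by
  rw [show (2 * Real.pi / 3 : ℝ) = Real.pi - Real.pi/3 by ring, Real.cos_pi_sub,
    Real.cos_pi_div_three]
lemma s23 : Real.sin (2 * Real.pi / 3) = Real.sqrt 3 / 2 := by
  rw [show (2 * Real.pi / 3 : ℝ) = Real.pi - Real.pi/3 by ring, Real.sin_pi_sub,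
    Real.sin_pi_div_three]
lemma c43 : Real.cos (4 * Real.pi / 3) = -(1/2) := by
  rw [show (4 * Real.pi / 3 : ℝ) = Real.pi + Real.pi/3 by ring, Real.cos_add]
  simp [Real.cos_pi_div_three]
lemma s43 : Real.sin (4 * Real.pi / 3) = -(Real.sqrt 3 / 2) := by
  rw [show (4 * Real.pi / 3 : ℝ) = Real.pi + Real.pi/3 by ring, Real.sin_add]
  simp [Real.sin_pi_div_three]
lemma c53 : Real.cos (5 * Real.pi / 3) = 1/2 := by
  rw [show (5 * Real.pi / 3 : ℝ) = 2*Real.pi - Real.pi/3 by ring, Real.cos_sub]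
  simp [Real.cos_pi_div_three, Real.cos_two_pi, Real.sin_two_pi]
lemma s53 : Real.sin (5 * Real.pi / 3) = -(Real.sqrt 3 / 2) := by
  rw [show (5 * Real.pi / 3 : ℝ) = 2*Real.pi - Real.pi/3 by ring, Real.sin_sub]
  simp [Real.sin_pi_div_three, Real.cos_two_pi, Real.sin_two_pi]

lemma u1e : u 1 = !₂[1, 0] := by
  ext i; fin_cases i <;> norm_num [u]
lemma u2e : u 2 = !₂[1/2, Real.sqrt 3 / 2] := by
  ext i; fin_cases i <;> norm_num [u, Real.cos_pi_div_three, Real.sin_pi_div_three]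
lemma u3e : u 3 = !₂[-(1/2), Real.sqrt 3 / 2] := by
  ext i; fin_cases i <;> norm_num [u, c23, s23]
lemma u4e : u 4 = !₂[-1, 0] := by
  ext i; fin_cases i <;> norm_num [u, Real.cos_pi, Real.sin_pi]
lemma u5e : u 5 = !₂[-(1/2), -(Real.sqrt 3 / 2)] := by
  ext i; fin_cases i <;> norm_num [u, c43, s43]
lemma u6e : u 6 = !₂[1/2, -(Real.sqrt 3 / 2)] := by
  ext i; fin_cases i <;> norm_num [u, c53, s53]

lemma u2n : u 2 = -u 5 := by
  apply eext <;> simp [u2e, u5e]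
lemma u4n : u 4 = -u 1 := by
  apply eext <;> simp [u4e, u1e]
lemma u6n : u 6 = -u 3 := by
  apply eext <;> simp [u6e, u3e]

lemma u1ne : u 1 ≠ 0 := by
  intro h
  have := congrArg (fun v : EE => v 0) h
  simp [u1e] at this
lemma u3ne : u 3 ≠ 0 := by
  intro h
  have := congrArg (fun v : EE => v 0) h
  simp [u3e] at this
lemma u5ne : u 5 ≠ 0 := by
  intro h
  have := congrArg (fun v : EE => v 0) h
  simp [u5e] at this

lemma mem_Hset_iff {x : EE} :
    x ∈ Hset ↔ ∃ m ∈ ({1, 3, 5} : Set ℕ), ∃ n : ℤ, n % 3 = 1 ∧ x = ((n : ℝ))⁻¹ • u m := by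
  constructor
  · rintro (⟨k, hk, j, hj, rfl⟩ | ⟨k, hk, j, hj, rfl⟩)
    · refine ⟨k, hk, 3 * (j : ℤ) - 2, by omega, ?_⟩
      congr 1
      push_cast
      rw [one_div]
    · have hj3 : (3 : ℝ) * (j : ℝ) - 1 ≠ 0 := by
        have : (1:ℝ) ≤ (j:ℝ) := by exact_mod_cast hj
        nlinarith
      have key : ∀ m : ℕ, u k = -u m →
          (1 / (3 * (j : ℝ) - 1)) • u k = (((1 - 3 * (j:ℤ) : ℤ) : ℝ))⁻¹ • u m := by
        intro m hm
        rw [hm]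
        push_cast
        rw [smul_neg, ← neg_smul]
        congr 1
        rw [one_div, ← inv_neg]
        congr 1
        ring
      rcases hk with rfl | rfl | rfl
      · exact ⟨5, by simp, 1 - 3*(j:ℤ), by omega, key 5 u2n⟩
      · exact ⟨1, by simp, 1 - 3*(j:ℤ), by omega, key 1 u4n⟩
      · exact ⟨3, by simp, 1 - 3*(j:ℤ), by omega, key 3 u6n⟩
  · rintro ⟨m, hm, n, hn, rfl⟩
    rcases lt_or_gt_of_ne (show n ≠ 0 by omega) with hneg | hpos
    · obtain ⟨j, hj1, hj2⟩ : ∃ j : ℕ, 1 ≤ j ∧ n = 1 - 3 * (j : ℤ) := ⟨(1 - n).toNat / 3, by omega, by omega⟩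
      have hj3 : (3 : ℝ) * (j : ℝ) - 1 ≠ 0 := by
        have : (1:ℝ) ≤ (j:ℝ) := by exact_mod_cast hj1
        nlinarith
      have key : ∀ k : ℕ, u k = -u m →
          ((n : ℝ))⁻¹ • u m = (1 / (3 * (j : ℝ) - 1)) • u k := by
        intro k hk
        rw [hk, smul_neg, ← neg_smul]
        congr 1
        have : (n : ℝ) = 1 - 3 * (j : ℝ) := by exact_mod_cast congrArg (fun z : ℤ => (z:ℝ)) hj2
        rw [this]
        rw [one_div, ← inv_neg]
        congr 1
        ring
      rcases hm with rfl | rfl | rfl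
      · exact Or.inr ⟨4, by simp, j, hj1, key 4 u4n⟩
      · exact Or.inr ⟨6, by simp, j, hj1, key 6 u6n⟩
      · exact Or.inr ⟨2, by simp, j, hj1, key 2 u2n⟩
    · obtain ⟨j, hj1, hj2⟩ : ∃ j : ℕ, 1 ≤ j ∧ n = 3 * (j : ℤ) - 2 := ⟨(n + 2).toNat / 3, by omega, by omega⟩
      refine Or.inl ⟨m, hm, j, hj1, ?_⟩
      congr 1
      have : (n : ℝ) = 3 * (j : ℝ) - 2 := by exact_mod_cast congrArg (fun z : ℤ => (z:ℝ)) hj2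
      rw [this, one_div]

lemma collinear_of_det2 {p q r : EE} (h : det2 (q - p) (r - p) = 0) :
    Collinear ℝ ({p, q, r} : Set EE) := by
  by_cases hq : q = p
  · have : ({p, q, r} : Set EE) = {p, r} := by rw [hq]; simp
    rw [this]
    exact collinear_pair ℝ p r
  · apply (collinear_iff_of_mem (Set.mem_insert p {q, r})).2
    refine ⟨q - p, fun x hx => ?_⟩
    rcases hx with hx | hx | hx
    · exact ⟨0, by simp [hx]⟩
    · exact ⟨1, by simp [hx]⟩
    · simp only [Set.mem_singleton_iff] at hx
      subst hx
      have hne : (q - p) 0 ≠ 0 ∨ (q - p) 1 ≠ 0 := by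
        by_contra hc
        push_neg at hc
        exact hq (sub_eq_zero.1 (eext hc.1 hc.2))
      simp only [det2, PiLp.sub_apply] at h
      rcases hne with h0 | h1
      · simp only [PiLp.sub_apply] at h0
        refine ⟨(x 0 - p 0) / (q 0 - p 0), ?_⟩
        have : x = ((x 0 - p 0) / (q 0 - p 0)) • (q - p) + p := by
          apply eext
          · simp only [PiLp.add_apply, PiLp.smul_apply, PiLp.sub_apply, smul_eq_mul]; field_simp; ring
          · simp only [PiLp.add_apply, PiLp.smul_apply, PiLp.sub_apply, smul_eq_mul]; field_simp; linear_combination h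
        simpa using this
      · simp only [PiLp.sub_apply] at h1
        refine ⟨(x 1 - p 1) / (q 1 - p 1), ?_⟩
        have : x = ((x 1 - p 1) / (q 1 - p 1)) • (q - p) + p := by
          apply eext
          · simp only [PiLp.add_apply, PiLp.smul_apply, PiLp.sub_apply, smul_eq_mul]; field_simp; linear_combination -h
          · simp only [PiLp.add_apply, PiLp.smul_apply, PiLp.sub_apply, smul_eq_mul]; field_simp; ring
        simpa using this

lemma det2_of_collinear_zero {a b : EE} (h : Collinear ℝ ({0, a, b} : Set EE)) :
    det2 a b = 0 := by
  obtain ⟨v, hv⟩ := (collinear_iff_of_mem (Set.mem_insert 0 {a, b})).1 h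
  obtain ⟨s, hs⟩ := hv a (by simp)
  obtain ⟨t, ht⟩ := hv b (by simp)
  rw [hs, ht]
  simp only [vadd_eq_add, add_zero, det2, PiLp.smul_apply, smul_eq_mul]
  ring

lemma key_collinear {a b c : ℝ} (ha : a ≠ 0) (hb : b ≠ 0) (hc : c ≠ 0) (habc : a + b + c = 0) :
    Collinear ℝ ({a⁻¹ • u 1, b⁻¹ • u 3, c⁻¹ • u 5} : Set EE) := by
  apply collinear_of_det2
  have : det2 (b⁻¹ • u 3 - a⁻¹ • u 1) (c⁻¹ • u 5 - a⁻¹ • u 1)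
      = Real.sqrt 3 * (a + b + c) / (2 * (a * b * c)) := by
    simp only [det2, PiLp.sub_apply, PiLp.smul_apply, u1e, u3e, u5e, smul_eq_mul,
      Matrix.cons_val_zero, Matrix.cons_val_one, Matrix.head_cons]
    field_simp
    ring
  rw [this, habc]
  simp

lemma det2_smul_smul (s t : ℝ) (x y : EE) : det2 (s • x) (t • y) = s * t * det2 x y := by
  simp only [det2, PiLp.smul_apply, smul_eq_mul]; ring

lemma smul_u_ne {m₁ m₂ : ℕ} (hm₁ : m₁ ∈ ({1,3,5} : Set ℕ)) (hm₂ : m₂ ∈ ({1,3,5} : Set ℕ))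
    (hne : m₁ ≠ m₂) {s t : ℝ} (hs : s ≠ 0) (ht : t ≠ 0) : s • u m₁ ≠ t • u m₂ := by
  intro h
  have h3 : Real.sqrt 3 ≠ 0 := by positivity
  have h32 : Real.sqrt 3 / 2 ≠ 0 := by positivity
  have dval : det2 (u m₁) (u m₂) = Real.sqrt 3 / 2 ∨ det2 (u m₁) (u m₂) = -(Real.sqrt 3 / 2) := by
    rcases hm₁ with rfl | rfl | rfl <;> rcases hm₂ with rfl | rfl | rfl
    · exact absurd rfl hne
    · left; simp [det2, u1e, u3e, u5e]
    · right; simp [det2, u1e, u3e, u5e]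
    · right; simp [det2, u1e, u3e, u5e]
    · exact absurd rfl hne
    · left; simp [det2, u1e, u3e, u5e]; ring
    · left; simp [det2, u1e, u3e, u5e]
    · right; simp [det2, u1e, u3e, u5e]; ring
    · exact absurd rfl hne
  have hd : det2 (s • u m₁) (t • u m₂) ≠ 0 := by
    rw [det2_smul_smul]
    rcases dval with hv | hv <;> rw [hv]
    · exact mul_ne_zero (mul_ne_zero hs ht) h32
    · exact mul_ne_zero (mul_ne_zero hs ht) (neg_ne_zero.mpr h32)
  apply hd
  rw [h, det2_smul_smul]
  have : det2 (u m₂) (u m₂) = 0 := by simp [det2]; ring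
  rw [this]; ring

lemma collinear_smul_smul_smul (v : EE) (s t w : ℝ) :
    Collinear ℝ ({s • v, t • v, w • v} : Set EE) := by
  apply collinear_of_det2
  simp only [det2, PiLp.sub_apply, PiLp.smul_apply, smul_eq_mul]
  ring

open Filter Set in
lemma ray_compact (v : EE) (c : ℝ) (hc : 0 < c) :
    IsCompact ((fun t : ℝ => t • v) '' (insert 0 (Set.range (fun j : ℕ => 1 / (3 * (j:ℝ) + c))))) := by
  have h1 : Tendsto (fun j : ℕ => 3 * (j:ℝ) + c) atTop atTop :=
    tendsto_atTop_add_const_right _ c (tendsto_natCast_atTop_atTop.const_mul_atTop (by norm_num))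
  have h2 : Tendsto (fun j : ℕ => 1 / (3 * (j:ℝ) + c)) atTop (nhds 0) := by
    simpa [one_div, Pi.inv_def] using h1.inv_tendsto_atTop
  exact ((h2.isCompact_insert_range)).image (continuous_id.smul continuous_const)

open Set in
lemma hset_decomp : Hset ∪ {0} =
    (fun t : ℝ => t • u 1) '' (insert 0 (range (fun j : ℕ => 1 / (3 * (j:ℝ) + 1)))) ∪
    (fun t : ℝ => t • u 3) '' (insert 0 (range (fun j : ℕ => 1 / (3 * (j:ℝ) + 1)))) ∪
    (fun t : ℝ => t • u 5) '' (insert 0 (range (fun j : ℕ => 1 / (3 * (j:ℝ) + 1)))) ∪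
    (fun t : ℝ => t • u 2) '' (insert 0 (range (fun j : ℕ => 1 / (3 * (j:ℝ) + 2)))) ∪
    (fun t : ℝ => t • u 4) '' (insert 0 (range (fun j : ℕ => 1 / (3 * (j:ℝ) + 2)))) ∪
    (fun t : ℝ => t • u 6) '' (insert 0 (range (fun j : ℕ => 1 / (3 * (j:ℝ) + 2)))) := by
  have hco1 : ∀ j : ℕ, 1 ≤ j → (1 : ℝ) / (3 * (j:ℝ) - 2) = 1 / (3 * ((j - 1 : ℕ):ℝ) + 1) := by
    intro j hj
    congr 1
    push_cast [Nat.cast_sub hj]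
    ring
  have hco2 : ∀ j : ℕ, 1 ≤ j → (1 : ℝ) / (3 * (j:ℝ) - 1) = 1 / (3 * ((j - 1 : ℕ):ℝ) + 2) := by
    intro j hj
    congr 1
    push_cast [Nat.cast_sub hj]
    ring
  ext x
  simp only [Hset, union_assoc, mem_union, mem_setOf_eq, mem_singleton_iff, mem_image,
    mem_insert_iff, mem_range]
  constructor
  · rintro (⟨k, hk, j, hj, rfl⟩ | ⟨k, hk, j, hj, rfl⟩ | rfl)
    · rcases hk with rfl | rfl | rfl
      · exact Or.inl ⟨_, Or.inr ⟨j - 1, rfl⟩, (hco1 j hj ▸ rfl)⟩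
      · exact Or.inr (Or.inl ⟨_, Or.inr ⟨j - 1, rfl⟩, (hco1 j hj ▸ rfl)⟩)
      · exact Or.inr (Or.inr (Or.inl ⟨_, Or.inr ⟨j - 1, rfl⟩, (hco1 j hj ▸ rfl)⟩))
    · rcases hk with rfl | rfl | rfl
      · exact Or.inr (Or.inr (Or.inr (Or.inl ⟨_, Or.inr ⟨j - 1, rfl⟩, (hco2 j hj ▸ rfl)⟩)))
      · exact Or.inr (Or.inr (Or.inr (Or.inr (Or.inl ⟨_, Or.inr ⟨j - 1, rfl⟩, (hco2 j hj ▸ rfl)⟩))))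
      · exact Or.inr (Or.inr (Or.inr (Or.inr (Or.inr ⟨_, Or.inr ⟨j - 1, rfl⟩, (hco2 j hj ▸ rfl)⟩))))
    · exact Or.inl ⟨0, Or.inl rfl, zero_smul ℝ _⟩
  · have conv1 : ∀ k : ℕ, k ∈ ({1,3,5} : Set ℕ) →
        (∃ t : ℝ, (t = 0 ∨ ∃ j : ℕ, 1 / (3 * (j:ℝ) + 1) = t) ∧ t • u k = x) →
        (∃ k ∈ ({1,3,5} : Set ℕ), ∃ j : ℕ, 1 ≤ j ∧ x = (1 / (3 * (j : ℝ) - 2)) • u k) ∨ x = 0 := by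
      rintro k hk ⟨t, (rfl | ⟨j, rfl⟩), rfl⟩
      · exact Or.inr (zero_smul ℝ _)
      · refine Or.inl ⟨k, hk, j + 1, le_add_self, ?_⟩
        congr 1
        push_cast
        ring
    have conv2 : ∀ k : ℕ, k ∈ ({2,4,6} : Set ℕ) →
        (∃ t : ℝ, (t = 0 ∨ ∃ j : ℕ, 1 / (3 * (j:ℝ) + 2) = t) ∧ t • u k = x) →
        (∃ k ∈ ({2,4,6} : Set ℕ), ∃ j : ℕ, 1 ≤ j ∧ x = (1 / (3 * (j : ℝ) - 1)) • u k) ∨ x = 0 := by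
      rintro k hk ⟨t, (rfl | ⟨j, rfl⟩), rfl⟩
      · exact Or.inr (zero_smul ℝ _)
      · refine Or.inl ⟨k, hk, j + 1, le_add_self, ?_⟩
        congr 1
        push_cast
        ring
    rintro (h | h | h | h | h | h)
    · rcases conv1 1 (by simp) h with h' | h'
      · exact Or.inl h'
      · exact Or.inr (Or.inr h')
    · rcases conv1 3 (by simp) h with h' | h'
      · exact Or.inl h'
      · exact Or.inr (Or.inr h')
    · rcases conv1 5 (by simp) h with h' | h'
      · exact Or.inl h'
      · exact Or.inr (Or.inr h')
    · rcases conv2 2 (by simp) h with h' | h'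
      · exact Or.inr (Or.inl h')
      · exact Or.inr (Or.inr h')
    · rcases conv2 4 (by simp) h with h' | h'
      · exact Or.inr (Or.inl h')
      · exact Or.inr (Or.inr h')
    · rcases conv2 6 (by simp) h with h' | h'
      · exact Or.inr (Or.inl h')
      · exact Or.inr (Or.inr h')

lemma hset_compact : IsCompact (Hset ∪ {0}) := by
  rw [hset_decomp]
  have h1 := ray_compact (u 1) 1 one_pos
  have h3 := ray_compact (u 3) 1 one_pos
  have h5 := ray_compact (u 5) 1 one_pos
  have h2 := ray_compact (u 2) 2 two_pos
  have h4 := ray_compact (u 4) 2 two_pos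
  have h6 := ray_compact (u 6) 2 two_pos
  exact ((((h1.union h3).union h5).union h2).union h4).union h6

lemma hset_countable : (Hset ∪ {0}).Countable := by
  apply Set.Countable.union _ (Set.countable_singleton 0)
  apply Set.Countable.union
  · apply Set.Countable.mono _
      (Set.countable_range (fun p : ℕ × ℕ => (1 / (3 * (p.2 : ℝ) - 2)) • u p.1))
    rintro x ⟨k, _, j, _, rfl⟩
    exact ⟨(k, j), rfl⟩
  · apply Set.Countable.mono _
      (Set.countable_range (fun p : ℕ × ℕ => (1 / (3 * (p.2 : ℝ) - 1)) • u p.1))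
    rintro x ⟨k, _, j, _, rfl⟩
    exact ⟨(k, j), rfl⟩


lemma hset_not_collinear : ¬ Collinear ℝ (Hset ∪ {0}) := by
  intro h
  have h0 : (0 : EE) ∈ Hset ∪ {0} := Or.inr rfl
  have h1 : u 1 ∈ Hset ∪ {0} := by
    refine Or.inl (Or.inl ⟨1, by simp, 1, le_refl 1, ?_⟩)
    norm_num
  have h2 : (1/2 : ℝ) • u 2 ∈ Hset ∪ {0} := by
    refine Or.inl (Or.inr ⟨2, by simp, 1, le_refl 1, ?_⟩)
    norm_num
  have hsub : ({0, u 1, (1/2 : ℝ) • u 2} : Set EE) ⊆ Hset ∪ {0} := by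
    rintro x (rfl | rfl | rfl)
    exacts [h0, h1, h2]
  have hcol := h.subset hsub
  have hd := det2_of_collinear_zero hcol
  have h3 : Real.sqrt 3 ≠ 0 := by positivity
  simp [det2, u1e, u2e, PiLp.smul_apply, h3] at hd

theorem Hset_union_zero_properties :
    IsCompact (Hset ∪ {0}) ∧ (Hset ∪ {0}).Countable ∧ ¬ Collinear ℝ (Hset ∪ {0}) ∧
    ∀ L : AffineSubspace ℝ (EuclideanSpace ℝ (Fin 2)), IsLine L →
      ¬ ∃ p q, p ≠ q ∧ (L : Set (EuclideanSpace ℝ (Fin 2))) ∩ (Hset ∪ {0}) = {p, q} := by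
  refine ⟨hset_compact, hset_countable, hset_not_collinear, ?_⟩
  rintro L _ ⟨p, q, hpq, hset⟩
  have hp' : p ∈ (L : Set EE) ∩ (Hset ∪ {0}) := by rw [hset]; exact Or.inl rfl
  have hq' : q ∈ (L : Set EE) ∩ (Hset ∪ {0}) := by rw [hset]; exact Or.inr rfl
  obtain ⟨hpL, hpH⟩ := hp'
  obtain ⟨hqL, hqH⟩ := hq'
  -- if r ∈ Hset ∪ {0} is collinear with p,q and distinct from both, contradiction
  have third : ∀ r : EE, r ∈ Hset ∪ {0} → Collinear ℝ ({p, q, r} : Set EE) →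
      r ≠ p → r ≠ q → False := by
    intro r hrH hcol hrp hrq
    have hmem : r ∈ affineSpan ℝ ({p, q} : Set EE) :=
      hcol.mem_affineSpan_of_mem_of_ne (by simp) (by simp) (by simp) hpq
    have hle : affineSpan ℝ ({p, q} : Set EE) ≤ L := by
      apply affineSpan_le.2
      rintro z (rfl | rfl)
      · exact hpL
      · exact hqL
    have hrL : r ∈ (L : Set EE) := hle hmem
    have : r ∈ ({p, q} : Set EE) := by rw [← hset]; exact ⟨hrL, hrH⟩
    rcases this with h | h
    · exact hrp h
    · exact hrq h
  -- ne facts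
  have une : ∀ m ∈ ({1,3,5} : Set ℕ), u m ≠ 0 := by
    rintro m (rfl | rfl | rfl)
    · exact u1ne
    · exact u3ne
    · exact u5ne
  have inv_ne : ∀ n : ℤ, n % 3 = 1 → ((n : ℝ))⁻¹ ≠ 0 := by
    intro n hn
    have : (n : ℝ) ≠ 0 := Int.cast_ne_zero.2 (by omega)
    exact inv_ne_zero this
  -- the case where one point is 0 and the other is (n)⁻¹ • u m,
  -- plus the case of two points in the same direction, reduce to:
  -- if p and q are both multiples of u m (m ∈ {1,3,5}), find a third point.
  have same_dir : ∀ m ∈ ({1,3,5} : Set ℕ), ∀ s t : ℝ, p = s • u m → q = t • u m → False := by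
    intro m hm s t hpe hqe
    -- p and q are multiples of u m; so is every (n)⁻¹ • u m and 0.
    -- among 0, u m, (4:ℝ)⁻¹ • u m, (7:ℝ)⁻¹ • u m there are ≥ 2 not in {p, q};
    -- find one and contradict.
    have hcand : ∃ w : ℝ, ((w)⁻¹ • u m ∈ Hset) ∧ (w)⁻¹ • u m ≠ p ∧ (w)⁻¹ • u m ≠ q := by
      have hmem : ∀ n : ℤ, n % 3 = 1 → ((n:ℝ))⁻¹ • u m ∈ Hset :=
        fun n hn => mem_Hset_iff.2 ⟨m, hm, n, hn, rfl⟩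
      have hinj : Function.Injective (fun w : ℝ => w • u m) :=
        fun a b hab => smul_left_injective ℝ (une m hm) hab
      -- the three candidates 1, 4⁻¹, 7⁻¹ are distinct; at most two equal p resp q
      have h147 : ((1:ℝ))⁻¹ ≠ ((4:ℝ))⁻¹ ∧ ((1:ℝ))⁻¹ ≠ ((7:ℝ))⁻¹ ∧ ((4:ℝ))⁻¹ ≠ ((7:ℝ))⁻¹ := by
        norm_num
      by_cases h1p : ((1:ℝ))⁻¹ • u m = p
      · by_cases h4q : ((4:ℝ))⁻¹ • u m = q
        · refine ⟨7, by simpa using hmem 7 (by norm_num), ?_, ?_⟩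
          · rw [← h1p]; intro hcon; exact absurd (hinj hcon) (by norm_num)
          · rw [← h4q]; intro hcon; exact absurd (hinj hcon) (by norm_num)
        · by_cases h7q : ((7:ℝ))⁻¹ • u m = q
          · refine ⟨4, by simpa using hmem 4 (by norm_num), ?_, ?_⟩
            · rw [← h1p]; intro hcon; exact absurd (hinj hcon) (by norm_num)
            · rw [← h7q]; intro hcon; exact absurd (hinj hcon) (by norm_num)
          · exact ⟨4, by simpa using hmem 4 (by norm_num), by rw [← h1p]; intro hcon; exact absurd (hinj hcon) (by norm_num), h4q⟩
      · by_cases h1q : ((1:ℝ))⁻¹ • u m = q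
        · by_cases h4p : ((4:ℝ))⁻¹ • u m = p
          · refine ⟨7, by simpa using hmem 7 (by norm_num), ?_, ?_⟩
            · rw [← h4p]; intro hcon; exact absurd (hinj hcon) (by norm_num)
            · rw [← h1q]; intro hcon; exact absurd (hinj hcon) (by norm_num)
          · exact ⟨4, by simpa using hmem 4 (by norm_num), h4p, by rw [← h1q]; intro hcon; exact absurd (hinj hcon) (by norm_num)⟩
        · exact ⟨1, by simpa using hmem 1 (by norm_num), h1p, h1q⟩
    obtain ⟨w, hwH, hwp, hwq⟩ := hcand
    apply third ((w)⁻¹ • u m) (Or.inl hwH) _ hwp hwq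
    rw [hpe, hqe]
    exact collinear_smul_smul_smul (u m) s t (w)⁻¹
  rcases hpH with hpH | hp0
  · obtain ⟨m₁, hm₁, n₁, hn₁, hpe⟩ := mem_Hset_iff.1 hpH
    rcases hqH with hqH | hq0
    · obtain ⟨m₂, hm₂, n₂, hn₂, hqe⟩ := mem_Hset_iff.1 hqH
      by_cases hmm : m₁ = m₂
      · exact same_dir m₁ hm₁ _ _ hpe (by rw [hqe, hmm])
      · -- different directions: construct the third point
        set n₃ : ℤ := -n₁ - n₂ with hn₃def
        have hn₃ : n₃ % 3 = 1 := by omega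
        have ha : ((n₁ : ℝ)) ≠ 0 := Int.cast_ne_zero.2 (by omega)
        have hb : ((n₂ : ℝ)) ≠ 0 := Int.cast_ne_zero.2 (by omega)
        have hc : ((n₃ : ℝ)) ≠ 0 := Int.cast_ne_zero.2 (by omega)
        have habc : (n₁ : ℝ) + (n₂ : ℝ) + (n₃ : ℝ) = 0 := by push_cast [hn₃def]; ring
        -- determine the third direction m₃
        obtain ⟨m₃, hm₃, hm₃1, hm₃2, hcol⟩ :
            ∃ m₃, m₃ ∈ ({1,3,5} : Set ℕ) ∧ m₃ ≠ m₁ ∧ m₃ ≠ m₂ ∧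
              Collinear ℝ ({p, q, ((n₃:ℝ))⁻¹ • u m₃} : Set EE) := by
          rcases hm₁ with rfl | rfl | rfl <;> rcases hm₂ with rfl | rfl | rfl
          · exact absurd rfl hmm
          · refine ⟨5, by simp, by simp, by simp, (key_collinear ha hb hc habc).subset ?_⟩
            rintro z (rfl | rfl | rfl)
            · simp [hpe]
            · simp [hqe]
            · simp
          · refine ⟨3, by simp, by simp, by simp, (key_collinear ha hc hb (by linarith)).subset ?_⟩
            rintro z (rfl | rfl | rfl)
            · simp [hpe]
            · simp [hqe]
            · simp
          · refine ⟨5, by simp, by simp, by simp, (key_collinear hb ha hc (by linarith)).subset ?_⟩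
            rintro z (rfl | rfl | rfl)
            · simp [hpe]
            · simp [hqe]
            · simp
          · exact absurd rfl hmm
          · refine ⟨1, by simp, by simp, by simp, (key_collinear hc ha hb (by linarith)).subset ?_⟩
            rintro z (rfl | rfl | rfl)
            · simp [hpe]
            · simp [hqe]
            · simp
          · refine ⟨3, by simp, by simp, by simp, (key_collinear hb hc ha (by linarith)).subset ?_⟩
            rintro z (rfl | rfl | rfl)
            · simp [hpe]
            · simp [hqe]
            · simp
          · refine ⟨1, by simp, by simp, by simp, (key_collinear hc hb ha (by linarith)).subset ?_⟩
            rintro z (rfl | rfl | rfl)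
            · simp [hpe]
            · simp [hqe]
            · simp
          · exact absurd rfl hmm
        apply third (((n₃:ℝ))⁻¹ • u m₃) (Or.inl (mem_Hset_iff.2 ⟨m₃, hm₃, n₃, hn₃, rfl⟩)) hcol
        · rw [hpe]; exact smul_u_ne hm₃ hm₁ hm₃1 (inv_ne n₃ hn₃) (inv_ne n₁ hn₁)
        · rw [hqe]; exact smul_u_ne hm₃ hm₂ hm₃2 (inv_ne n₃ hn₃) (inv_ne n₂ hn₂)
    · -- q = 0
      have hq0' : q = (0:ℝ) • u m₁ := by rw [hq0]; simp
      exact same_dir m₁ hm₁ _ _ hpe hq0'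
  · rcases hqH with hqH | hq0
    · obtain ⟨m₂, hm₂, n₂, hn₂, hqe⟩ := mem_Hset_iff.1 hqH
      have hp0' : p = (0:ℝ) • u m₂ := by rw [hp0]; simp
      exact same_dir m₂ hm₂ _ _ hp0' hqe
    · exact hpq (hp0.trans hq0.symm)
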